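/- Let p be a prime, g ≥ 1, and let G be a group of order p^{2g} that admits at least (p^{2g}-1)/(p-1) distinct normal subgroups of index p (equivalently, at least (p^{2g}-1)/(p-1) distinct surjections onto Z/pZ up to automorphism of the target). Then G is isomorphic to (Z/pZ)^{2g}. -/

import Mathlib

/-!
Let `V = Hom(G, ℤ/p)`, an `𝔽_p`-vector space. Each normal subgroup of index `p` is the kernel of
exactly `p - 1` elements of `V`, and these are nonzero, so `|V| ≥ 1 + (p - 1)|S| ≥ p^(2g) = |G|`.
The evaluation map `G → V^*`, `x ↦ (f ↦ f x)`, is surjective: a functional on `V^*` vanishing on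
its image is evaluation at some `f ∈ V` vanishing on all of `G`. Since `|V^*| = |V| ≥ |G|`, it is
an isomorphism, and `G` is an `𝔽_p`-vector space of dimension `2g`.
-/

open Function Module
open scoped Finset

theorem Nat.pow_le_mul_pred_add_one_of_div_le {p k s : ℕ} (h : (p ^ k - 1) / (p - 1) ≤ s) :
    p ^ k ≤ s * (p - 1) + 1 := by
  have hdvd : p - 1 ∣ p ^ k - 1 := by simpa using Nat.sub_dvd_pow_sub_pow p 1 k
  calc p ^ k ≤ (p ^ k - 1) + 1 := le_tsub_add
    _ = (p ^ k - 1) / (p - 1) * (p - 1) + 1 := by rw [Nat.div_mul_cancel hdvd]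
    _ ≤ s * (p - 1) + 1 := by gcongr

section

variable {p : ℕ} [Fact p.Prime] {A : Type*} [AddGroup A]

theorem AddSubgroup.exists_zmod_addMonoidHom_ker_eq (K : AddSubgroup A) [K.Normal]
    (hK : K.index = p) : ∃ f : A →+ ZMod p, f.ker = K := by
  let e : A ⧸ K ≃+ ZMod p := addEquivOfPrimeCardEq hK (Nat.card_zmod p)
  refine ⟨e.toAddMonoidHom.comp (QuotientAddGroup.mk' K), ?_⟩
  rw [AddMonoidHom.ker_comp_of_injective _ _ e.injective, QuotientAddGroup.ker_mk']

theorem card_mul_pred_add_one_le_card_zmod_addMonoidHom [Finite A] (S : Finset (AddSubgroup A))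
    (hS : ∀ K ∈ S, K.Normal ∧ K.index = p) : #S * (p - 1) + 1 ≤ Nat.card (A →+ ZMod p) := by
  classical
  have : Fintype (A →+ ZMod p) := @Fintype.ofFinite _ (FunLike.finite _)
  have hker (K : S) : ∃ f : A →+ ZMod p, f.ker = K :=
    have := (hS K K.2).1
    AddSubgroup.exists_zmod_addMonoidHom_ker_eq _ (hS K K.2).2
  choose f hf using hker
  have hf0 (K : S) : f K ≠ 0 := by
    intro h
    have hK := (hS K K.2).2
    rw [← hf K, h, AddMonoidHom.ker_zero, AddSubgroup.index_top] at hK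
    exact (Fact.out : p.Prime).one_lt.ne hK
  let Ψ : S × (ZMod p)ˣ → (A →+ ZMod p) := fun Ku => (Ku.2 : ZMod p) • f Ku.1
  have hΨker (Ku : S × (ZMod p)ˣ) : (Ψ Ku).ker = Ku.1 := by
    ext a
    rw [← hf Ku.1]
    simp [Ψ, AddMonoidHom.mem_ker, Ku.2.ne_zero]
  have hΨ : Injective Ψ := by
    rintro ⟨K, u⟩ ⟨K', u'⟩ h
    obtain rfl : K = K' := Subtype.ext (by rw [← hΨker (K, u), h, hΨker])
    simpa [Units.ext_iff] using smul_left_injective (ZMod p) (hf0 K) h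
  have hΨ0 : (0 : A →+ ZMod p) ∉ Set.range Ψ := by
    rintro ⟨⟨K, u⟩, h⟩
    exact hf0 K ((smul_eq_zero.mp h).resolve_left u.ne_zero)
  simpa [Nat.card_eq_fintype_card, ZMod.card_units, Nat.totient_prime Fact.out] using
    Fintype.card_lt_of_injective_of_notMem Ψ hΨ hΨ0

variable (p A) in
def AddMonoidHom.zmodEval : A →+ Dual (ZMod p) (A →+ ZMod p) :=
  (toZModLinearMapEquiv p).toAddMonoidHom.comp AddMonoidHom.eval

theorem AddMonoidHom.zmodEval_surjective [Finite A] : Surjective (zmodEval p A) := by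
  have : Finite (A →+ ZMod p) := FunLike.finite _
  have : Module.Finite (ZMod p) (A →+ ZMod p) := Module.Finite.of_finite
  set W := AddSubgroup.toZModSubmodule p (zmodEval p A).range
  have hW : W.dualCoannihilator = ⊥ := by
    refine (Submodule.eq_bot_iff _).2 fun f hf => ?_
    ext a
    exact (Submodule.mem_dualCoannihilator f).1 hf _ ⟨a, rfl⟩
  have hW' : W = ⊤ := by
    rw [← Subspace.dualCoannihilator_dualAnnihilator_eq (W := W), hW, Submodule.dualAnnihilator_bot]
  intro φ
  exact (show φ ∈ W from hW' ▸ Submodule.mem_top)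

theorem nonempty_addEquiv_zmod_pi_of_card_le [Finite A] {n : ℕ} (hA : Nat.card A = p ^ n)
    (h : p ^ n ≤ Nat.card (A →+ ZMod p)) : Nonempty (A ≃+ (Fin n → ZMod p)) := by
  have : Finite (A →+ ZMod p) := FunLike.finite _
  have : Module.Finite (ZMod p) (A →+ ZMod p) := Module.Finite.of_finite
  have hdual : Nat.card (Dual (ZMod p) (A →+ ZMod p)) = Nat.card (A →+ ZMod p) := by
    rw [natCard_eq_pow_finrank (K := ZMod p) (V := Dual _ _),
      natCard_eq_pow_finrank (K := ZMod p) (V := A →+ ZMod p), Subspace.dual_finrank_eq]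
  have hbij : Bijective (AddMonoidHom.zmodEval p A) :=
    AddMonoidHom.zmodEval_surjective.bijective_of_nat_card_le (by rw [hdual, hA]; exact h)
  have hrank : finrank (ZMod p) (Dual (ZMod p) (A →+ ZMod p)) = n := by
    have := (Nat.card_congr (AddEquiv.ofBijective _ hbij).toEquiv).symm.trans hA
    rw [natCard_eq_pow_finrank (K := ZMod p), Nat.card_zmod] at this
    exact Nat.pow_right_injective (Fact.out : p.Prime).two_le this
  exact ⟨(AddEquiv.ofBijective _ hbij).trans
    (LinearEquiv.ofFinrankEq _ (Fin n → ZMod p) (by rw [hrank, finrank_fin_fun])).toAddEquiv⟩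

end

theorem elementaryAbelian_of_many_index_p_subgroups_general
    (p : ℕ) (hp : p.Prime) (g : ℕ)
    (G : Type*) [Group G] (hG : Nat.card G = p ^ (2 * g))
    (S : Finset (Subgroup G))
    (hcard : (p ^ (2 * g) - 1) / (p - 1) ≤ S.card)
    (hS : ∀ K ∈ S, K.Normal ∧ K.index = p) :
    Nonempty (G ≃* Multiplicative (Fin (2 * g) → ZMod p)) := by
  have := Fact.mk hp
  have : Finite G := Nat.finite_of_card_ne_zero (by simp [hG, hp.ne_zero])
  have hS' : ∀ K ∈ S.map Subgroup.toAddSubgroup.toEmbedding, K.Normal ∧ K.index = p := by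
    simp only [Finset.mem_map]
    rintro _ ⟨K, hK, rfl⟩
    exact ⟨⟨(hS K hK).1.conj_mem⟩, Subgroup.index_toAddSubgroup.trans (hS K hK).2⟩
  have hcount := card_mul_pred_add_one_le_card_zmod_addMonoidHom _ hS'
  rw [Finset.card_map] at hcount
  obtain ⟨e⟩ := nonempty_addEquiv_zmod_pi_of_card_le (A := Additive G) hG
    ((Nat.pow_le_mul_pred_add_one_of_div_le hcard).trans hcount)
  exact ⟨AddEquiv.toMultiplicativeRight e⟩

/-- Let `p` be a prime, `g ≥ 1`, and `G` a group of order `p^(2g)`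
admitting at least `(p^(2g) - 1)/(p - 1)` distinct normal subgroups of index
`p`. Then `G` is isomorphic to `(ℤ/pℤ)^(2g)`. -/
theorem elementaryAbelian_of_many_index_p_subgroups
    (p : ℕ) (hp : p.Prime) (g : ℕ) (hg : 1 ≤ g)
    (G : Type*) [Group G] (hG : Nat.card G = p ^ (2 * g))
    (S : Finset (Subgroup G))
    (hcard : (p ^ (2 * g) - 1) / (p - 1) ≤ S.card)
    (hS : ∀ K ∈ S, K.Normal ∧ K.index = p) :
    Nonempty (G ≃* Multiplicative (Fin (2 * g) → ZMod p)) :=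
  elementaryAbelian_of_many_index_p_subgroups_general p hp g G hG S hcard hS
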